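/- Let K be an infinite dimensional metrizable Choquet simplex and (p_n)_{n≥0} an increasing sequence of positive integers with p_n | p_{n+1}. Then there exist an increasing subsequence (n_i)_{i≥1} and positive integer matrices (M_i)_{i≥1} managed by (p_{n_i})_{i≥0}, with k_{i+1} ≤ min entry of M_i, such that K is affinely homeomorphic to the inverse limit lim←(Δ(k_i, p_{n_i}), M_i), where k_i is the number of rows of M_i. -/

import Mathlib

/-!
Column-stochastic matrices are contractions for the `ℓ¹` norm. Hence, if two sequences `(a i)`,
`(b i)` of column-stochastic matrices are `2⁻ⁱ`-close column by column, then for a point `w` of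
`lim← (Δ(k i, 1), a i)` the vectors `b i ⋯ b (i + d - 1) w (i + d)` form a Cauchy sequence in `d`,
whose limit lies within `2 · 2⁻ⁱ` of `w i`. The limits form a point of `lim← (Δ(k i, 1), b i)`,
and this map is affine, continuous, and inverse to the same construction with `a` and `b`
exchanged.

Starting from `K = lim← (Δ(n + 1, 1), A n)`, pass to a subsequence `n_i` along which the ratios
`q i = p (n (i + 1)) / p (n i)` are large, and round the columns of `A (i + 1)` to vectors with
denominator `q i` and numerators `≥ i + 3`; the numerators form the matrices `M i`. Finally,
scaling level `i` by `1 / p (n i)` turns `lim← (Δ(i + 2, 1), M i / q i)` into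
`lim← (Δ(i + 2, p (n i)), M i)`.
-/

/-- The simplex `Δ(k,p) = {v ∈ (ℝ⁺)^k : Σ v_i = 1/p}`; `Δ(k,1)` is the unit simplex. -/
def simplexSet (k : ℕ) (p : ℕ) : Set (Fin k → ℝ) :=
  {v | (∀ i, 0 ≤ v i) ∧ (∑ i, v i) = 1 / (p : ℝ)}

/-- The sequence of positive integer matrices `(M n)` is managed by the
increasing sequence `(p n)`. -/
def IsManaged (p : ℕ → ℕ) (k : ℕ → ℕ)
    (M : ∀ n, Matrix (Fin (k n)) (Fin (k (n + 1))) ℤ) : Prop :=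
  (∀ n, 0 < p n) ∧ StrictMono p ∧ (∀ n, p n ∣ p (n + 1)) ∧
  (∀ n, 2 ≤ k n) ∧ (∀ n i j, 0 < M n i j) ∧
  (∀ n j, (∑ i, M n i j) * (p n : ℤ) = (p (n + 1) : ℤ))

/-- The sets `S ⊆ E` and `T ⊆ F` are affinely homeomorphic. -/
def AffinelyHomeomorphic {E F : Type*}
    [AddCommGroup E] [Module ℝ E] [TopologicalSpace E]
    [AddCommGroup F] [Module ℝ F] [TopologicalSpace F]
    (S : Set E) (T : Set F) : Prop :=
  ∃ f : S ≃ₜ T, ∀ (x y z : S) (t : ℝ), 0 ≤ t → t ≤ 1 →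
    (z : E) = t • (x : E) + (1 - t) • (y : E) →
    (f z : F) = t • (f x : F) + (1 - t) • (f y : F)

open Filter Finset Topology
open scoped Matrix

section AffinelyHomeomorphic

variable {E F G : Type*} [AddCommGroup E] [Module ℝ E] [TopologicalSpace E]
  [AddCommGroup F] [Module ℝ F] [TopologicalSpace F]
  [AddCommGroup G] [Module ℝ G] [TopologicalSpace G]

theorem AffinelyHomeomorphic.of_invOn {S : Set E} {T : Set F} {f : E → F} {g : F → E}
    (hf : ContinuousOn f S) (hg : ContinuousOn g T) (hfST : Set.MapsTo f S T)
    (hgTS : Set.MapsTo g T S) (hinv : Set.InvOn g f S T)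
    (hfaff : ∀ x ∈ S, ∀ y ∈ S, ∀ t : ℝ, 0 ≤ t → t ≤ 1 →
      f (t • x + (1 - t) • y) = t • f x + (1 - t) • f y) :
    AffinelyHomeomorphic S T :=
  ⟨{ toFun := hfST.restrict f S T
     invFun := hgTS.restrict g T S
     left_inv := fun x => Subtype.ext (hinv.1 x.2)
     right_inv := fun y => Subtype.ext (hinv.2 y.2)
     continuous_toFun := hf.mapsToRestrict hfST
     continuous_invFun := hg.mapsToRestrict hgTS },
   fun x y z t ht0 ht1 hz => by
     simp only [Homeomorph.homeomorph_mk_coe, Equiv.coe_fn_mk, Set.MapsTo.val_restrict_apply, hz]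
     exact hfaff x x.2 y y.2 t ht0 ht1⟩

theorem AffinelyHomeomorphic.trans {S : Set E} {T : Set F} {U : Set G}
    (hST : AffinelyHomeomorphic S T) (hTU : AffinelyHomeomorphic T U) :
    AffinelyHomeomorphic S U := by
  obtain ⟨f, hf⟩ := hST
  obtain ⟨g, hg⟩ := hTU
  exact ⟨f.trans g, fun x y z t ht0 ht1 hz => hg _ _ _ t ht0 ht1 (hf x y z t ht0 ht1 hz)⟩

end AffinelyHomeomorphic

def sumAbs {ι : Type*} [Fintype ι] (u : ι → ℝ) : ℝ := ∑ l, |u l|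

section SumAbs

variable {ι κ : Type*} [Fintype ι] [Fintype κ]

theorem norm_le_sumAbs (u : ι → ℝ) : ‖u‖ ≤ sumAbs u :=
  (pi_norm_le_iff_of_nonneg (sum_nonneg fun _ _ => abs_nonneg _)).2 fun l =>
    (Real.norm_eq_abs _).trans_le (single_le_sum (f := fun l => |u l|)
      (fun _ _ => abs_nonneg _) (mem_univ l))

theorem sumAbs_sub_le (u v w : ι → ℝ) : sumAbs (u - w) ≤ sumAbs (u - v) + sumAbs (v - w) := by
  simp only [sumAbs, ← sum_add_distrib, Pi.sub_apply]
  exact sum_le_sum fun l _ => abs_sub_le _ _ _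

theorem continuous_sumAbs : Continuous (sumAbs : (ι → ℝ) → ℝ) :=
  continuous_finsetSum _ fun l _ => (continuous_apply l).abs

theorem sumAbs_mulVec_le (D : Matrix ι κ ℝ) (u : κ → ℝ) :
    sumAbs (D *ᵥ u) ≤ ∑ j, (∑ l, |D l j|) * |u j| :=
  calc sumAbs (D *ᵥ u) ≤ ∑ l, ∑ j, |D l j| * |u j| :=
        sum_le_sum fun l _ => (abs_sum_le_sum_abs _ _).trans_eq (by simp [abs_mul])
    _ = ∑ j, (∑ l, |D l j|) * |u j| := by rw [sum_comm]; simp only [sum_mul]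

end SumAbs

def Matrix.IsColStochastic {ι κ : Type*} [Fintype ι] (M : Matrix ι κ ℝ) : Prop :=
  (∀ l j, 0 ≤ M l j) ∧ ∀ j, ∑ l, M l j = 1

namespace Matrix.IsColStochastic

variable {n m : ℕ} {M : Matrix (Fin m) (Fin n) ℝ}

theorem sumAbs_mulVec_le (hM : M.IsColStochastic) (u : Fin n → ℝ) :
    sumAbs (M *ᵥ u) ≤ sumAbs u :=
  (_root_.sumAbs_mulVec_le M u).trans_eq <| sum_congr rfl fun j _ => by
    simp [abs_of_nonneg (hM.1 _ j), hM.2 j]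

theorem mulVec_mem_simplexSet (hM : M.IsColStochastic) {u : Fin n → ℝ}
    (hu : u ∈ simplexSet n 1) : M *ᵥ u ∈ simplexSet m 1 := by
  simp only [simplexSet, Set.mem_ofPred_eq, Matrix.mulVec_apply_eq_sum]
  refine ⟨fun l => sum_nonneg fun j _ => mul_nonneg (hM.1 l j) (hu.1 j), ?_⟩
  rw [sum_comm, ← hu.2]
  exact sum_congr rfl fun j _ => by rw [← sum_mul, hM.2 j, one_mul]

end Matrix.IsColStochastic

theorem sumAbs_mulVec_sub_mulVec_le {n m : ℕ} {M N : Matrix (Fin m) (Fin n) ℝ} {e : ℝ}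
    (hMN : ∀ j, ∑ l, |M l j - N l j| ≤ e) {u : Fin n → ℝ} (hu : u ∈ simplexSet n 1) :
    sumAbs (M *ᵥ u - N *ᵥ u) ≤ e := by
  rw [← Matrix.sub_mulVec]
  refine (sumAbs_mulVec_le _ u).trans ?_
  calc ∑ j, (∑ l, |(M - N) l j|) * |u j| ≤ ∑ j, e * u j :=
        sum_le_sum fun j _ => by
          rw [abs_of_nonneg (hu.1 j)]
          exact mul_le_mul_of_nonneg_right (hMN j) (hu.1 j)
    _ = e := by rw [← mul_sum, hu.2, Nat.cast_one, div_one, mul_one]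

theorem isClosed_simplexSet (n p : ℕ) : IsClosed (simplexSet n p) := by
  rw [simplexSet, Set.ofPred_and, Set.ofPred_forall]
  exact (isClosed_iInter fun l => isClosed_le continuous_const (continuous_apply l)).inter
    (isClosed_eq (continuous_finsetSum _ fun l _ => continuous_apply l) continuous_const)

theorem tendsto_two_mul_half_pow_add (i : ℕ) :
    Tendsto (fun d => 2 * (1 / 2 : ℝ) ^ (i + d)) atTop (𝓝 0) := by
  simpa [pow_add, mul_assoc] using
    (tendsto_pow_atTop_nhds_zero_of_lt_one (by norm_num : (0 : ℝ) ≤ 1 / 2)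
      (by norm_num)).const_mul (2 * (1 / 2 : ℝ) ^ i)

namespace InverseLimit

variable {k : ℕ → ℕ}

def invLim (m : ∀ i, Matrix (Fin (k i)) (Fin (k (i + 1))) ℝ) : Set (∀ i, Fin (k i) → ℝ) :=
  {w | ∀ i, w i ∈ simplexSet (k i) 1 ∧ w i = m i *ᵥ w (i + 1)}

/-- The product `m i * m (i + 1) * ⋯ * m (i + d - 1)`, as a map from level `i + d` to level `i`. -/
def bondingMap (m : ∀ i, Matrix (Fin (k i)) (Fin (k (i + 1))) ℝ) (i : ℕ) :
    ∀ d, (Fin (k (i + d)) → ℝ) →ₗ[ℝ] Fin (k i) → ℝ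
  | 0 => LinearMap.id
  | d + 1 => bondingMap m i d ∘ₗ (m (i + d)).toLin'

def IsClose (a b : ∀ i, Matrix (Fin (k i)) (Fin (k (i + 1))) ℝ) : Prop :=
  ∀ i j, ∑ l, |a i l j - b i l j| ≤ (1 / 2 : ℝ) ^ i

theorem IsClose.symm {a b : ∀ i, Matrix (Fin (k i)) (Fin (k (i + 1))) ℝ} (h : IsClose a b) :
    IsClose b a := fun i j => by simpa only [abs_sub_comm] using h i j

noncomputable def transfer (b : ∀ i, Matrix (Fin (k i)) (Fin (k (i + 1))) ℝ)
    (w : ∀ i, Fin (k i) → ℝ) : ∀ i, Fin (k i) → ℝ :=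
  fun i => limUnder atTop fun d => bondingMap b i d (w (i + d))

section BondingMap

variable {m : ∀ i, Matrix (Fin (k i)) (Fin (k (i + 1))) ℝ}

theorem bondingMap_succ (i d : ℕ) (u : Fin (k (i + (d + 1))) → ℝ) :
    bondingMap m i (d + 1) u = bondingMap m i d (m (i + d) *ᵥ u) := rfl

theorem bondingMap_succ_eq_mulVec (w : ∀ n, Fin (k n) → ℝ) (i d : ℕ) :
    bondingMap m i (d + 1) (w (i + (d + 1))) = m i *ᵥ bondingMap m (i + 1) d (w (i + 1 + d)) := by
  induction d generalizing w with
  | zero => rfl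
  | succ d ih => exact ih fun n => m n *ᵥ w (n + 1)

theorem continuous_bondingMap (i d : ℕ) : Continuous (bondingMap m i d) :=
  LinearMap.continuous_of_finiteDimensional _

theorem bondingMap_of_mem_invLim {w : ∀ i, Fin (k i) → ℝ} (hw : w ∈ invLim m) (i d : ℕ) :
    bondingMap m i d (w (i + d)) = w i := by
  induction d with
  | zero => rfl
  | succ d ih =>
    show bondingMap m i d (m (i + d) *ᵥ w (i + d + 1)) = w i
    rw [← (hw (i + d)).2, ih]

variable (hm : ∀ i, (m i).IsColStochastic)
include hm

theorem sumAbs_bondingMap_le (i d : ℕ) (u : Fin (k (i + d)) → ℝ) :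
    sumAbs (bondingMap m i d u) ≤ sumAbs u := by
  induction d with
  | zero => exact le_rfl
  | succ d ih => exact (ih _).trans ((hm (i + d)).sumAbs_mulVec_le u)

theorem bondingMap_mem_simplexSet {i d : ℕ} {u : Fin (k (i + d)) → ℝ}
    (hu : u ∈ simplexSet (k (i + d)) 1) : bondingMap m i d u ∈ simplexSet (k i) 1 := by
  induction d with
  | zero => exact hu
  | succ d ih => exact ih ((hm (i + d)).mulVec_mem_simplexSet hu)

end BondingMap

section Transfer

variable {a b : ∀ i, Matrix (Fin (k i)) (Fin (k (i + 1))) ℝ}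
  (hb : ∀ i, (b i).IsColStochastic) (hab : IsClose a b)
  {w : ∀ i, Fin (k i) → ℝ} (hw : w ∈ invLim a)
include hb hab hw

theorem sumAbs_bondingMap_succ_sub_le (i d : ℕ) :
    sumAbs (bondingMap b i (d + 1) (w (i + (d + 1))) - bondingMap b i d (w (i + d)))
      ≤ (1 / 2 : ℝ) ^ (i + d) := by
  rw [bondingMap_succ, (hw (i + d)).2, ← map_sub]
  exact (sumAbs_bondingMap_le hb i d _).trans
    (sumAbs_mulVec_sub_mulVec_le (hab.symm (i + d)) (hw (i + d + 1)).1)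

theorem sumAbs_bondingMap_sub_le (i : ℕ) {d D : ℕ} (hdD : d ≤ D) :
    sumAbs (bondingMap b i D (w (i + D)) - bondingMap b i d (w (i + d)))
      ≤ 2 * (1 / 2 : ℝ) ^ (i + d) - 2 * (1 / 2 : ℝ) ^ (i + D) := by
  induction D, hdD using Nat.le_induction with
  | base => simp [sumAbs]
  | succ D _ ih =>
    have hstep := sumAbs_bondingMap_succ_sub_le hb hab hw i D
    have hhalf : 2 * (1 / 2 : ℝ) ^ (i + (D + 1)) = (1 / 2 : ℝ) ^ (i + D) := by
      rw [← add_assoc, pow_succ]; ring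
    linarith [sumAbs_sub_le (bondingMap b i (D + 1) (w (i + (D + 1))))
      (bondingMap b i D (w (i + D))) (bondingMap b i d (w (i + d)))]

theorem tendsto_transfer (i : ℕ) :
    Tendsto (fun d => bondingMap b i d (w (i + d))) atTop (𝓝 (transfer b w i)) := by
  refine tendsto_nhds_limUnder (cauchySeq_tendsto_of_complete ?_)
  refine Metric.cauchySeq_iff'.2 fun ε hε => ?_
  obtain ⟨N, hN⟩ := ((tendsto_two_mul_half_pow_add i).eventually_lt_const hε).exists
  refine ⟨N, fun D hD => ?_⟩
  calc dist (bondingMap b i D (w (i + D))) (bondingMap b i N (w (i + N)))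
      ≤ sumAbs (bondingMap b i D (w (i + D)) - bondingMap b i N (w (i + N))) :=
        (dist_eq_norm _ _).trans_le (norm_le_sumAbs _)
    _ ≤ 2 * (1 / 2 : ℝ) ^ (i + N) - 2 * (1 / 2 : ℝ) ^ (i + D) :=
        sumAbs_bondingMap_sub_le hb hab hw i hD
    _ < ε := by linarith [pow_pos (by norm_num : (0 : ℝ) < 1 / 2) (i + D)]

theorem sumAbs_transfer_sub_le (i d : ℕ) :
    sumAbs (transfer b w i - bondingMap b i d (w (i + d))) ≤ 2 * (1 / 2 : ℝ) ^ (i + d) := by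
  refine le_of_tendsto ((continuous_sumAbs.tendsto _).comp
    ((tendsto_transfer hb hab hw i).sub_const _)) ?_
  filter_upwards [eventually_ge_atTop d] with D hD
  rw [Function.comp_apply]
  linarith [sumAbs_bondingMap_sub_le hb hab hw i hD,
    pow_pos (by norm_num : (0 : ℝ) < 1 / 2) (i + D)]

theorem transfer_mem_invLim : transfer b w ∈ invLim b := by
  intro i
  refine ⟨(isClosed_simplexSet _ _).mem_of_tendsto (tendsto_transfer hb hab hw i)
    (Eventually.of_forall fun d => bondingMap_mem_simplexSet hb (hw (i + d)).1), ?_⟩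
  refine tendsto_nhds_unique ((tendsto_transfer hb hab hw i).comp (tendsto_add_atTop_nat 1)) ?_
  simp only [Function.comp_def, bondingMap_succ_eq_mulVec w]
  exact ((continuous_const.matrix_mulVec continuous_id).tendsto _).comp
    (tendsto_transfer hb hab hw (i + 1))

theorem transfer_add_smul {w' : ∀ i, Fin (k i) → ℝ} (hw' : w' ∈ invLim a) (t s : ℝ) :
    transfer b (t • w + s • w') = t • transfer b w + s • transfer b w' := by
  funext i
  refine Tendsto.limUnder_eq ?_
  simpa only [Pi.add_apply, Pi.smul_apply, map_add, map_smul] using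
    ((tendsto_transfer hb hab hw i).const_smul t).add
      ((tendsto_transfer hb hab hw' i).const_smul s)

end Transfer

theorem transfer_eq_of_sumAbs_sub_le {a : ∀ i, Matrix (Fin (k i)) (Fin (k (i + 1))) ℝ}
    (ha : ∀ i, (a i).IsColStochastic) {w z : ∀ i, Fin (k i) → ℝ} (hw : w ∈ invLim a)
    (hz : ∀ j, sumAbs (z j - w j) ≤ 2 * (1 / 2 : ℝ) ^ j) : transfer a z = w := by
  funext i
  refine Tendsto.limUnder_eq (f := atTop) (tendsto_iff_norm_sub_tendsto_zero.2 ?_)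
  refine squeeze_zero (fun _ => norm_nonneg _) (fun d => ?_) (tendsto_two_mul_half_pow_add i)
  calc ‖bondingMap a i d (z (i + d)) - w i‖
      = ‖bondingMap a i d (z (i + d) - w (i + d))‖ := by
        rw [map_sub, bondingMap_of_mem_invLim hw]
    _ ≤ sumAbs (z (i + d) - w (i + d)) :=
        (norm_le_sumAbs _).trans (sumAbs_bondingMap_le ha i d _)
    _ ≤ 2 * (1 / 2 : ℝ) ^ (i + d) := hz (i + d)

theorem continuousOn_transfer {a b : ∀ i, Matrix (Fin (k i)) (Fin (k (i + 1))) ℝ}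
    (hb : ∀ i, (b i).IsColStochastic) (hab : IsClose a b) :
    ContinuousOn (transfer b) (invLim a) := by
  refine continuousOn_pi.2 fun i => TendstoUniformlyOn.continuousOn
    (F := fun d w => bondingMap b i d (w (i + d))) (p := atTop) ?_ (Frequently.of_forall fun d =>
      ((continuous_bondingMap i d).comp (continuous_apply (i + d))).continuousOn)
  refine Metric.tendstoUniformlyOn_iff.2 fun ε hε => ?_
  filter_upwards [(tendsto_two_mul_half_pow_add i).eventually_lt_const hε] with d hd w hw
  exact ((dist_eq_norm _ _).trans_le ((norm_le_sumAbs _).trans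
    (sumAbs_transfer_sub_le hb hab hw i d))).trans_lt hd

theorem affinelyHomeomorphic_invLim {a b : ∀ i, Matrix (Fin (k i)) (Fin (k (i + 1))) ℝ}
    (ha : ∀ i, (a i).IsColStochastic) (hb : ∀ i, (b i).IsColStochastic) (hab : IsClose a b) :
    AffinelyHomeomorphic (invLim a) (invLim b) :=
  .of_invOn (continuousOn_transfer hb hab) (continuousOn_transfer ha hab.symm)
    (fun _ hw => transfer_mem_invLim hb hab hw) (fun _ hw => transfer_mem_invLim ha hab.symm hw)
    ⟨fun _ hw => transfer_eq_of_sumAbs_sub_le ha hw (sumAbs_transfer_sub_le hb hab hw · 0),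
      fun _ hw => transfer_eq_of_sumAbs_sub_le hb hw (sumAbs_transfer_sub_le ha hab.symm hw · 0)⟩
    (fun _ hx _ hy t _ _ => transfer_add_smul hb hab hx hy t (1 - t))

end InverseLimit

theorem exists_nat_sum_eq_sum_abs_sub_le {ι : Type*} [Fintype ι] [Nonempty ι] {w : ι → ℝ}
    (hw0 : ∀ l, 0 ≤ w l) (hw1 : ∑ l, w l = 1) (Q : ℕ) :
    ∃ a : ι → ℕ, ∑ l, a l = Q ∧ ∑ l, |(a l : ℝ) - Q * w l| ≤ 2 * Fintype.card ι := by
  classical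
  obtain ⟨l₀⟩ := ‹Nonempty ι›
  set f : ι → ℕ := fun l => ⌊(Q : ℝ) * w l⌋₊
  have hf_le : ∀ l, (f l : ℝ) ≤ Q * w l := fun l => Nat.floor_le (by have := hw0 l; positivity)
  have hf_gt : ∀ l, (Q : ℝ) * w l < f l + 1 := fun l => Nat.lt_floor_add_one _
  have hQ : ∑ l, (Q : ℝ) * w l = Q := by rw [← mul_sum, hw1, mul_one]
  have hsum_le : ∑ l, f l ≤ Q := by
    exact_mod_cast (sum_le_sum fun l _ => hf_le l).trans_eq hQ
  -- the rounding deficit `D` is put on the single coordinate `l₀`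
  set D := Q - ∑ l, f l
  have hD : (D : ℝ) = ∑ l, ((Q : ℝ) * w l - f l) := by
    rw [sum_sub_distrib, hQ, Nat.cast_sub hsum_le, Nat.cast_sum]
  refine ⟨fun l => f l + if l = l₀ then D else 0, ?_, ?_⟩
  · rw [sum_add_distrib, sum_ite_eq']
    simp only [mem_univ, if_true]
    omega
  calc ∑ l, |((f l + if l = l₀ then D else 0 : ℕ) : ℝ) - Q * w l|
      ≤ ∑ l, (((Q : ℝ) * w l - f l) + if l = l₀ then (D : ℝ) else 0) := by
        refine sum_le_sum fun l _ => abs_le.2 ⟨?_, ?_⟩ <;>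
          split_ifs <;> push_cast <;> linarith [hf_le l, (Nat.cast_nonneg D : (0 : ℝ) ≤ D)]
    _ = 2 * D := by rw [sum_add_distrib, sum_ite_eq', if_pos (mem_univ _), ← hD]; ring
    _ ≤ 2 * Fintype.card ι := by
        refine mul_le_mul_of_nonneg_left ?_ zero_le_two
        rw [hD, Fintype.card_eq_sum_ones, Nat.cast_sum, Nat.cast_one]
        exact sum_le_sum fun l _ => by linarith [hf_gt l]

theorem exists_nat_approx_of_mem_simplexSet {m : ℕ} (hm : 0 < m) {w : Fin m → ℝ}
    (hw : w ∈ simplexSet m 1) {r q : ℕ} (hq : m * r ≤ q) :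
    ∃ c : Fin m → ℕ, (∀ l, r ≤ c l) ∧ ∑ l, c l = q ∧
      ∑ l, |(c l : ℝ) - q * w l| ≤ 2 * m * (r + 1) := by
  have : Nonempty (Fin m) := ⟨⟨0, hm⟩⟩
  have hw1 : ∑ l, w l = 1 := by simpa using hw.2
  obtain ⟨a, ha_sum, ha_err⟩ := exists_nat_sum_eq_sum_abs_sub_le hw.1 hw1 (q - m * r)
  rw [Fintype.card_fin] at ha_err
  refine ⟨fun l => r + a l, fun l => le_add_right le_rfl, ?_, ?_⟩
  · rw [sum_add_distrib, ha_sum, sum_const, card_univ, Fintype.card_fin, smul_eq_mul]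
    omega
  have hq' : (q : ℝ) = (q - m * r : ℕ) + m * r := by rw [Nat.cast_sub hq]; push_cast; ring
  calc ∑ l, |((r + a l : ℕ) : ℝ) - q * w l|
      ≤ ∑ l, (r + |(a l : ℝ) - (q - m * r : ℕ) * w l| + m * r * w l) := by
        refine sum_le_sum fun l _ => ?_
        have hmrw : 0 ≤ (m : ℝ) * r * w l := by have := hw.1 l; positivity
        rw [hq', abs_le]
        push_cast
        constructor <;> linarith [neg_abs_le ((a l : ℝ) - (q - m * r : ℕ) * w l),
          le_abs_self ((a l : ℝ) - (q - m * r : ℕ) * w l), (Nat.cast_nonneg r : (0 : ℝ) ≤ r)]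
    _ ≤ m * r + 2 * m + m * r := by
        rw [sum_add_distrib, sum_add_distrib, ← mul_sum, hw1]
        simp only [sum_const, card_univ, Fintype.card_fin, nsmul_eq_mul]
        linarith
    _ = 2 * m * (r + 1) := by ring

theorem two_mul_le_of_dvd_of_lt {a b : ℕ} (hdvd : a ∣ b) (hlt : a < b) : 2 * a ≤ b := by
  obtain ⟨d, rfl⟩ := hdvd
  rcases d with _ | _ | d
  · simp at hlt
  · simp at hlt
  · nlinarith

section Subsequence

variable {p : ℕ → ℕ} (hp : StrictMono p) (hpdvd : ∀ n, p n ∣ p (n + 1))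
include hp hpdvd

theorem two_pow_mul_le_of_dvd_succ (n g : ℕ) : 2 ^ g * p n ≤ p (n + g) := by
  induction g with
  | zero => simp
  | succ g ih =>
    calc 2 ^ (g + 1) * p n = 2 * (2 ^ g * p n) := by ring
      _ ≤ 2 * p (n + g) := Nat.mul_le_mul_left 2 ih
      _ ≤ p (n + (g + 1)) := two_mul_le_of_dvd_of_lt (hpdvd (n + g)) (hp (n + g).lt_succ_self)

theorem exists_strictMono_mul_eq (hp0 : ∀ n, 0 < p n) (N : ℕ → ℕ) :
    ∃ ni : ℕ → ℕ, StrictMono ni ∧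
      ∃ q : ℕ → ℕ, (∀ i, N i ≤ q i) ∧ ∀ i, p (ni i) * q i = p (ni (i + 1)) := by
  set ni : ℕ → ℕ := fun i => ∑ j ∈ range i, (N j + 1)
  have hni : ∀ i, ni (i + 1) = ni i + (N i + 1) := fun i => sum_range_succ _ _
  have hdvd : ∀ i, p (ni i) ∣ p (ni (i + 1)) := fun i =>
    Nat.rel_of_forall_rel_succ_of_le (· ∣ ·) hpdvd (by rw [hni]; omega)
  refine ⟨ni, strictMono_nat_of_lt_succ fun i => by rw [hni]; omega,
    fun i => p (ni (i + 1)) / p (ni i), fun i => ?_, fun i => Nat.mul_div_cancel' (hdvd i)⟩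
  refine le_of_mul_le_mul_left ?_ (hp0 (ni i))
  rw [Nat.mul_div_cancel' (hdvd i), hni]
  calc p (ni i) * N i ≤ 2 ^ (N i + 1) * p (ni i) := by
        rw [mul_comm]
        exact Nat.mul_le_mul_right _ (Nat.lt_two_pow_self.trans (Nat.pow_lt_pow_succ one_lt_two)).le
    _ ≤ _ := two_pow_mul_le_of_dvd_succ hp hpdvd _ _

end Subsequence

theorem single_mem_simplexSet {n : ℕ} (j : Fin n) : Pi.single j (1 : ℝ) ∈ simplexSet n 1 :=
  ⟨fun l => by by_cases h : l = j <;> simp [h], by simp⟩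

theorem isColStochastic_toMatrix' {m n : ℕ} {f : (Fin n → ℝ) →ₗ[ℝ] Fin m → ℝ}
    (hf : Set.MapsTo f (simplexSet n 1) (simplexSet m 1)) :
    (LinearMap.toMatrix' f).IsColStochastic :=
  ⟨fun l j => (hf (single_mem_simplexSet j)).1 l,
    fun j => by simpa using (hf (single_mem_simplexSet j)).2⟩

open InverseLimit in
theorem exists_int_matrix_isClose {k : ℕ → ℕ} (hk : ∀ i, 0 < k i)
    {a : ∀ i, Matrix (Fin (k i)) (Fin (k (i + 1))) ℝ} (ha : ∀ i, (a i).IsColStochastic)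
    {q : ℕ → ℕ} (hq : ∀ i, 2 * k i * (k (i + 1) + 1) * 2 ^ i ≤ q i) :
    ∃ M : ∀ i, Matrix (Fin (k i)) (Fin (k (i + 1))) ℤ,
      (∀ i l j, (k (i + 1) : ℤ) ≤ M i l j) ∧ (∀ i j, ∑ l, M i l j = q i) ∧
      (∀ i, ((q i : ℝ)⁻¹ • (M i).map (Int.cast : ℤ → ℝ)).IsColStochastic) ∧
      IsClose a fun i => (q i : ℝ)⁻¹ • (M i).map (Int.cast : ℤ → ℝ) := by
  have hq0 : ∀ i, (0 : ℝ) < q i := fun i => by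
    have := hk i
    exact_mod_cast (by positivity : 0 < 2 * k i * (k (i + 1) + 1) * 2 ^ i).trans_le (hq i)
  have hcol : ∀ i j, (fun l => a i l j) ∈ simplexSet (k i) 1 := fun i j =>
    ⟨fun l => (ha i).1 l j, by simpa using (ha i).2 j⟩
  have hkq : ∀ i, k i * k (i + 1) ≤ q i := fun i => by
    have : k i * k (i + 1) ≤ k i * (k (i + 1) + 1) := Nat.mul_le_mul_left _ (Nat.le_succ _)
    nlinarith [hq i, Nat.one_le_two_pow (n := i), Nat.zero_le (k i * (k (i + 1) + 1))]
  choose c hc_ge hc_sum hc_err using fun i j =>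
    exists_nat_approx_of_mem_simplexSet (hk i) (hcol i j) (hkq i)
  have hentry : ∀ i l j, ((q i : ℝ)⁻¹ • (Matrix.of fun l j => (c i j l : ℤ)).map
      (Int.cast : ℤ → ℝ)) l j = (q i : ℝ)⁻¹ * c i j l := fun i l j => by simp
  refine ⟨fun i => Matrix.of fun l j => (c i j l : ℤ), fun i l j => ?_, fun i j => ?_,
    fun i => ⟨fun l j => ?_, fun j => ?_⟩, fun i j => ?_⟩
  · simpa using hc_ge i j l
  · simpa using congrArg (Nat.cast : ℕ → ℤ) (hc_sum i j)
  · rw [hentry]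
    exact mul_nonneg (inv_nonneg.2 (hq0 i).le) (Nat.cast_nonneg _)
  · simp only [hentry, ← mul_sum, ← Nat.cast_sum, hc_sum, inv_mul_cancel₀ (hq0 i).ne']
  · calc ∑ l, |a i l j - ((q i : ℝ)⁻¹ • (Matrix.of fun l j => (c i j l : ℤ)).map
          (Int.cast : ℤ → ℝ)) l j|
        = (q i : ℝ)⁻¹ * ∑ l, |(c i j l : ℝ) - q i * a i l j| := by
          rw [mul_sum]
          refine sum_congr rfl fun l _ => ?_
          have hqa : (q i : ℝ)⁻¹ * c i j l - a i l j = (q i : ℝ)⁻¹ * (c i j l - q i * a i l j) := by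
            field_simp [(hq0 i).ne']
          rw [hentry, abs_sub_comm, hqa, abs_mul, abs_of_pos (inv_pos.2 (hq0 i))]
      _ ≤ (q i : ℝ)⁻¹ * (2 * k i * (k (i + 1) + 1)) :=
          mul_le_mul_of_nonneg_left (hc_err i j) (inv_nonneg.2 (hq0 i).le)
      _ ≤ (1 / 2 : ℝ) ^ i := by
          rw [inv_mul_le_iff₀ (hq0 i), div_pow, one_pow, ← div_eq_mul_one_div,
            le_div_iff₀ (by positivity)]
          exact_mod_cast hq i

namespace InverseLimit

/-- Recovers level `0` of a point of `lim← (Δ(n + 1, 1), A n)` from levels `≥ 1`. -/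
def consLevelZero (A₀ : (Fin 2 → ℝ) →ₗ[ℝ] Fin 1 → ℝ) (w : ∀ i : ℕ, Fin (i + 2) → ℝ) :
    ∀ n : ℕ, Fin (n + 1) → ℝ
  | 0 => A₀ (w 0)
  | n + 1 => w n

theorem affinelyHomeomorphic_invLim_toMatrix
    (A : ∀ n : ℕ, (Fin (n + 2) → ℝ) →ₗ[ℝ] (Fin (n + 1) → ℝ))
    (hA : ∀ n, A n '' simplexSet (n + 2) 1 = simplexSet (n + 1) 1) :
    AffinelyHomeomorphic
      {v : ∀ n : ℕ, Fin (n + 1) → ℝ |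
        (∀ n, v n ∈ simplexSet (n + 1) 1) ∧ ∀ n, v n = A n (v (n + 1))}
      (invLim (k := (· + 2)) fun i => LinearMap.toMatrix' (A (i + 1))) := by
  refine .of_invOn (f := fun v i => v (i + 1)) (g := consLevelZero (A 0))
    (continuous_pi fun i => continuous_apply (i + 1)).continuousOn
    (continuous_pi fun n => ?_).continuousOn (fun v hv i => ?_)
    (fun w hw => ⟨fun n => ?_, fun n => ?_⟩)
    ⟨fun v hv => funext fun n => ?_, fun w _ => rfl⟩ (fun _ _ _ _ _ _ _ => rfl)
  · cases n with
    | zero => exact (A 0).continuous_of_finiteDimensional.comp (continuous_apply 0)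
    | succ n => exact continuous_apply n
  · rw [LinearMap.toMatrix'_mulVec]
    exact ⟨hv.1 (i + 1), hv.2 (i + 1)⟩
  · cases n with
    | zero => exact hA 0 ▸ Set.mem_image_of_mem _ (hw 0).1
    | succ n => exact (hw n).1
  · cases n with
    | zero => rfl
    | succ n => exact (hw n).2.trans (LinearMap.toMatrix'_mulVec _ _)
  · cases n with
    | zero => exact (hv.2 0).symm
    | succ n => rfl

theorem affinelyHomeomorphic_invLim_inv_smul {k : ℕ → ℕ}
    (M : ∀ i, Matrix (Fin (k i)) (Fin (k (i + 1))) ℝ) {P q : ℕ → ℕ} (hP : ∀ i, 0 < P i)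
    (hPq : ∀ i, P i * q i = P (i + 1)) :
    AffinelyHomeomorphic (invLim fun i => (q i : ℝ)⁻¹ • M i)
      {v : ∀ i, Fin (k i) → ℝ |
        (∀ i, v i ∈ simplexSet (k i) (P i)) ∧ ∀ i, v i = M i *ᵥ v (i + 1)} := by
  have hP' : ∀ i, (P i : ℝ) ≠ 0 := fun i => by exact_mod_cast (hP i).ne'
  have hq' : ∀ i, (q i : ℝ)⁻¹ = P i / P (i + 1) := fun i => by
    rw [← hPq i, Nat.cast_mul, div_mul_cancel_left₀ (hP' i)]
  refine .of_invOn (f := fun w i => (P i : ℝ)⁻¹ • w i) (g := fun v i => (P i : ℝ) • v i)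
    (Continuous.continuousOn (by fun_prop)) (Continuous.continuousOn (by fun_prop))
    (fun w hw => ⟨fun i => ⟨fun l => ?_, ?_⟩, fun i => ?_⟩)
    (fun v hv => fun i => ⟨⟨fun l => ?_, ?_⟩, ?_⟩)
    ⟨fun w _ => funext fun i => ?_, fun v _ => funext fun i => ?_⟩ (fun _ _ _ _ t _ _ => ?_)
  · exact mul_nonneg (inv_nonneg.2 (Nat.cast_nonneg _)) ((hw i).1.1 l)
  · simp [← mul_sum, (hw i).1.2]
  · dsimp only
    rw [(hw i).2]
    simp only [hq', Matrix.smul_mulVec, Matrix.mulVec_smul, smul_smul]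
    congr 1
    field_simp [hP' i, hP' (i + 1)]
  · exact mul_nonneg (Nat.cast_nonneg _) ((hv.1 i).1 l)
  · simp [← mul_sum, (hv.1 i).2, hP' i]
  · dsimp only
    rw [hv.2 i]
    simp only [hq', Matrix.smul_mulVec, Matrix.mulVec_smul, smul_smul]
    congr 1
    field_simp [hP' i, hP' (i + 1)]
  · simp [smul_smul, hP' i]
  · simp [smul_smul, hP' i]
  · funext i
    simp only [Pi.add_apply, Pi.smul_apply, smul_add, smul_comm t, smul_comm (1 - t)]

end InverseLimit

open InverseLimit in
/-- `K` is an infinite dimensional metrizable Choquet simplex, presented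
(by the Lazar–Lindenstrauss theorem) as the inverse limit of unit simplices
`Δ(n+1,1)` along surjective linear maps `A n : Δ(n+2,1) → Δ(n+1,1)`. -/
theorem stmt15
    (A : ∀ n : ℕ, (Fin (n + 2) → ℝ) →ₗ[ℝ] (Fin (n + 1) → ℝ))
    (hA : ∀ n, A n '' simplexSet (n + 2) 1 = simplexSet (n + 1) 1)
    (K : Set (∀ n : ℕ, Fin (n + 1) → ℝ))
    (hK : K = {v | (∀ n, v n ∈ simplexSet (n + 1) 1) ∧ ∀ n, v n = A n (v (n + 1))})
    (p : ℕ → ℕ) (hp0 : ∀ n, 0 < p n) (hpmono : StrictMono p)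
    (hpdvd : ∀ n, p n ∣ p (n + 1)) :
    ∃ (ni : ℕ → ℕ) (k : ℕ → ℕ) (M : ∀ i, Matrix (Fin (k i)) (Fin (k (i + 1))) ℤ),
      StrictMono ni ∧
      IsManaged (fun i => p (ni i)) k M ∧
      (∀ i (l : Fin (k i)) (j : Fin (k (i + 1))), (k (i + 1) : ℤ) ≤ M i l j) ∧
      AffinelyHomeomorphic K
        {v : ∀ i : ℕ, Fin (k i) → ℝ |
          (∀ i, v i ∈ simplexSet (k i) (p (ni i))) ∧
          ∀ i, v i = ((M i).map (Int.cast : ℤ → ℝ)).mulVec (v (i + 1))} := by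
  subst hK
  obtain ⟨ni, hni, q, hq, hpq⟩ :=
    exists_strictMono_mul_eq hpmono hpdvd hp0 fun i => 2 * (i + 2) * (i + 3 + 1) * 2 ^ i
  have ha : ∀ i, (LinearMap.toMatrix' (A (i + 1))).IsColStochastic := fun i =>
    isColStochastic_toMatrix' fun u hu => hA (i + 1) ▸ Set.mem_image_of_mem _ hu
  obtain ⟨M, hM_ge, hM_sum, hb, hab⟩ :=
    exists_int_matrix_isClose (k := (· + 2)) (fun i => by omega) ha hq
  refine ⟨ni, (· + 2), M, hni, ⟨fun i => hp0 _, hpmono.comp hni, fun i => ⟨q i, (hpq i).symm⟩,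
    fun i => le_add_self, fun i l j => lt_of_lt_of_le (by positivity) (hM_ge i l j),
    fun i j => by rw [hM_sum, mul_comm]; exact_mod_cast hpq i⟩, hM_ge, ?_⟩
  exact (affinelyHomeomorphic_invLim_toMatrix A hA).trans <|
    (affinelyHomeomorphic_invLim ha hb hab).trans <|
      affinelyHomeomorphic_invLim_inv_smul _ (fun i => hp0 _) hpq
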